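/- There is no first-order concomitant from the bundle of Lorentz metrics over a spacetime manifold M to any tensor bundle over M (other than trivial constant sections); equivalently, for any Lorentz metric g on M and any two points p, p' ∈ M, there exist coordinate neighborhoods and a diffeomorphism φ of M with φ(p) = p' whose pullback matches g and its first coordinate partial derivatives at p with those of g at p'. -/

import Mathlib

open scoped BigOperators

noncomputable section

/-- Points of the coordinate patch (ℝ⁴). -/
abbrev Pt := Fin 4 → ℝ

/-- Component arrays of a two-index tensor. -/
abbrev Mtx := Fin 4 → Fin 4 → ℝ

/-- A metric (or two-index tensor) field in coordinates. -/
abbrev MetricField := Pt → Mtx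

/-- Partial derivative in the `i`-th coordinate direction. -/
def pd (f : Pt → ℝ) (i : Fin 4) (x : Pt) : ℝ :=
  fderiv ℝ f x (Pi.single i 1)

/-- The inverse metric components `g^{ab}`. -/
def ginv (g : MetricField) (x : Pt) : Mtx :=
  fun a b => (Matrix.of (g x))⁻¹ a b

/-- Christoffel symbols `Γ^a_{bc}` of the Levi-Civita connection of `g`. -/
def Christoffel (g : MetricField) (a b c : Fin 4) (x : Pt) : ℝ :=
  (1/2) * ∑ d, ginv g x a d *
    (pd (fun y => g y d c) b x + pd (fun y => g y b d) c x - pd (fun y => g y b c) d x)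

/-- Riemann curvature tensor `R^a_{bcd}` of the metric `g`. -/
def RiemannOfMetric (g : MetricField) (a b c d : Fin 4) (x : Pt) : ℝ :=
  pd (Christoffel g a d b) c x - pd (Christoffel g a c b) d x
    + ∑ e, (Christoffel g a c e x * Christoffel g e d b x
        - Christoffel g a d e x * Christoffel g e c b x)

/-- Ricci tensor `R_{bd} = R^a_{bad}`. -/
def RicciOfMetric (g : MetricField) (b d : Fin 4) (x : Pt) : ℝ :=
  ∑ a, RiemannOfMetric g a b a d x

/-- Scalar curvature `R = g^{bd} R_{bd}`. -/
def ScalarCurv (g : MetricField) (x : Pt) : ℝ :=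
  ∑ b, ∑ d, ginv g x b d * RicciOfMetric g b d x

/-- Einstein tensor `G_{ab} = R_{ab} - (1/2) R g_{ab}`. -/
def EinsteinOfMetric (g : MetricField) (a b : Fin 4) (x : Pt) : ℝ :=
  RicciOfMetric g a b x - (1/2) * ScalarCurv g x * g x a b

/-- Covariant divergence `∇^a S_{ab}` of a two-covariant-index tensor field,
taken with the Levi-Civita connection of `g`. -/
def covDiv (g : MetricField) (S : MetricField) (b : Fin 4) (x : Pt) : ℝ :=
  ∑ a, ∑ c, ginv g x a c *
    (pd (fun y => S y c b) a x
      - ∑ d, Christoffel g d a c x * S x d b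
      - ∑ d, Christoffel g d a b x * S x c d)

/-- The Minkowski metric `diag(1,-1,-1,-1)`. -/
def minkowski : Mtx := fun i j => if i = j then (if i = 0 then 1 else -1) else 0

/-- A symmetric matrix of components has Lorentz signature `(+,-,-,-)`. -/
def IsLorentzSig (A : Mtx) : Prop :=
  ∃ P : Matrix (Fin 4) (Fin 4) ℝ, IsUnit P.det ∧
    ∀ i j, ∑ k, ∑ l, P k i * A k l * P l j = minkowski i j

/-- A Lorentz metric field: smooth, symmetric, of Lorentz signature everywhere. -/
structure IsLorentzMetric (g : MetricField) : Prop where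
  smooth : ContDiff ℝ (⊤ : ℕ∞) (fun x => g x)
  symm : ∀ x a b, g x a b = g x b a
  sig : ∀ x, IsLorentzSig (g x)

/-- Pullback `(φ^* g)_{ab}(x) = g_{kl}(φ(x)) ∂_a φ^k ∂_b φ^l` of a two-index
covariant tensor field along `φ`. -/
def pullback (φ : Pt → Pt) (g : MetricField) : MetricField :=
  fun x a b => ∑ k, ∑ l,
    g (φ x) k l * fderiv ℝ φ x (Pi.single a 1) k * fderiv ℝ φ x (Pi.single b 1) l

/-- `φ` is a (global) diffeomorphism of ℝ⁴. -/
def IsDiffeo (φ : Pt → Pt) : Prop :=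
  ContDiff ℝ (⊤ : ℕ∞) φ ∧ ∃ ψ : Pt → Pt, ContDiff ℝ (⊤ : ℕ∞) ψ ∧
    Function.LeftInverse ψ φ ∧ Function.RightInverse ψ φ

end

noncomputable section
namespace NFC

abbrev ee (i : Fin 4) : Pt := Pi.single i 1

lemma ee_apply (i m : Fin 4) : ee i m = if m = i then 1 else 0 := by
  simp [ee, Pi.single_apply]

lemma diffAt {f : Pt → ℝ} (hf : ContDiff ℝ (⊤ : ℕ∞) f) (x : Pt) : DifferentiableAt ℝ f x :=
  (hf.differentiable (by simp)).differentiableAt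

lemma diffAtV {φ : Pt → Pt} (hφ : ContDiff ℝ (⊤ : ℕ∞) φ) (x : Pt) : DifferentiableAt ℝ φ x :=
  (hφ.differentiable (by simp)).differentiableAt

lemma contDiff_comp_component {φ : Pt → Pt} (hφ : ContDiff ℝ (⊤ : ℕ∞) φ) (k : Fin 4) :
    ContDiff ℝ (⊤ : ℕ∞) (fun y => φ y k) := (contDiff_pi.mp hφ) k

lemma fderiv_component {φ : Pt → Pt} {x : Pt} (h : DifferentiableAt ℝ φ x) (v : Pt) (k : Fin 4) :
    fderiv ℝ φ x v k = fderiv ℝ (fun y => φ y k) x v := by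
  have h2 : (fun y => φ y k) = (ContinuousLinearMap.proj (R := ℝ) (φ := fun _ : Fin 4 => ℝ) k) ∘ φ := rfl
  rw [h2, fderiv_comp x (ContinuousLinearMap.proj k).differentiableAt h]
  simp

/-- Jacobian entry ∂_a φ^k as a scalar function. -/
def J (φ : Pt → Pt) (x : Pt) (k a : Fin 4) : ℝ := pd (fun y => φ y k) a x

lemma pd_congr {f h : Pt → ℝ} (hfh : ∀ x, f x = h x) (i : Fin 4) (x : Pt) :
    pd f i x = pd h i x := by
  have : f = h := funext hfh
  rw [this]

lemma pd_const (c : ℝ) (i : Fin 4) (x : Pt) : pd (fun _ => c) i x = 0 := by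
  simp [pd, fderiv_const]

lemma pd_add {f h : Pt → ℝ} {x : Pt} (hf : DifferentiableAt ℝ f x)
    (hh : DifferentiableAt ℝ h x) (i : Fin 4) :
    pd (fun y => f y + h y) i x = pd f i x + pd h i x := by
  simp [pd, fderiv_fun_add hf hh]

lemma pd_sub {f h : Pt → ℝ} {x : Pt} (hf : DifferentiableAt ℝ f x)
    (hh : DifferentiableAt ℝ h x) (i : Fin 4) :
    pd (fun y => f y - h y) i x = pd f i x - pd h i x := by
  simp [pd, fderiv_fun_sub hf hh]

lemma pd_mul {f h : Pt → ℝ} {x : Pt} (hf : DifferentiableAt ℝ f x)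
    (hh : DifferentiableAt ℝ h x) (i : Fin 4) :
    pd (fun y => f y * h y) i x = f x * pd h i x + h x * pd f i x := by
  simp [pd, fderiv_fun_mul hf hh]

lemma pd_const_mul {f : Pt → ℝ} {x : Pt} (hf : DifferentiableAt ℝ f x) (c : ℝ) (i : Fin 4) :
    pd (fun y => c * f y) i x = c * pd f i x := by
  simp [pd, fderiv_const_mul hf]

lemma pd_sum {ι : Type*} {u : Finset ι} {A : ι → Pt → ℝ} {x : Pt}
    (h : ∀ i ∈ u, DifferentiableAt ℝ (A i) x) (c : Fin 4) :
    pd (fun y => ∑ i ∈ u, A i y) c x = ∑ i ∈ u, pd (A i) c x := by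
  simp [pd, fderiv_fun_sum h]

lemma pd_coord (m i : Fin 4) (x : Pt) : pd (fun y => y m) i x = if m = i then 1 else 0 := by
  have h2 : (fun y : Pt => y m) = fun y => (ContinuousLinearMap.proj (R := ℝ) (φ := fun _ : Fin 4 => ℝ) m) y := rfl
  rw [pd, h2, ContinuousLinearMap.fderiv]
  simp [Pi.single_apply]

lemma pd_comp {h : Pt → ℝ} {φ : Pt → Pt} {x : Pt} (hh : DifferentiableAt ℝ h (φ x))
    (hφ : DifferentiableAt ℝ φ x) (c : Fin 4) :
    pd (fun y => h (φ y)) c x = ∑ n, pd h n (φ x) * J φ x n c := by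
  have h1 : pd (fun y => h (φ y)) c x = fderiv ℝ h (φ x) (fderiv ℝ φ x (ee c)) := by
    have hc : (fun y => h (φ y)) = h ∘ φ := rfl
    rw [pd, hc, fderiv_comp x hh hφ]; rfl
  rw [h1]
  have h2 : fderiv ℝ φ x (ee c) = ∑ n, (J φ x n c) • ee n := by
    funext m
    rw [Finset.sum_apply]
    have h3 : ∀ n : Fin 4, (J φ x n c • ee n) m = (if m = n then J φ x n c else 0) := by
      intro n; by_cases hmn : m = n <;> simp [ee_apply, hmn]
    rw [Finset.sum_congr rfl (fun n _ => h3 n), Finset.sum_ite_eq]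
    simp only [Finset.mem_univ, if_true]
    rw [fderiv_component hφ (ee c) m]; rfl
  rw [h2, map_sum]
  congr 1; funext n
  rw [map_smul]
  show J φ x n c * fderiv ℝ h (φ x) (ee n) = pd h n (φ x) * J φ x n c
  rw [mul_comm]; rfl

lemma contDiff_pd {f : Pt → ℝ} (hf : ContDiff ℝ (⊤ : ℕ∞) f) (i : Fin 4) :
    ContDiff ℝ (⊤ : ℕ∞) (fun x => pd f i x) :=
  (hf.fderiv_right (by simp)).clm_apply contDiff_const

lemma contDiff_J {φ : Pt → Pt} (hφ : ContDiff ℝ (⊤ : ℕ∞) φ) (k a : Fin 4) :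
    ContDiff ℝ (⊤ : ℕ∞) (fun x => J φ x k a) :=
  contDiff_pd (contDiff_comp_component hφ k) a

end NFC
end
noncomputable section
namespace NFC

def idM : Mtx := fun k a => if k = a then 1 else 0

/-- 2-jet data of a smooth map at a point. -/
structure Jet (φ : Pt → Pt) (x₀ y₀ : Pt) (A : Mtx) (S : Fin 4 → Mtx) : Prop where
  smooth : ContDiff ℝ (⊤ : ℕ∞) φ
  val : φ x₀ = y₀
  jac : ∀ k a, J φ x₀ k a = A k a
  snd : ∀ k a c, pd (fun x => J φ x k a) c x₀ = S k a c

lemma Jet.congrS {φ : Pt → Pt} {x₀ y₀ : Pt} {A A' : Mtx} {S S' : Fin 4 → Mtx}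
    (h : Jet φ x₀ y₀ A S) (hA : ∀ k a, A k a = A' k a) (hS : ∀ k a c, S k a c = S' k a c) :
    Jet φ x₀ y₀ A' S' :=
  ⟨h.smooth, h.val, fun k a => (h.jac k a).trans (hA k a),
    fun k a c => (h.snd k a c).trans (hS k a c)⟩

lemma Jet.congrFun {φ φ' : Pt → Pt} {x₀ y₀ : Pt} {A : Mtx} {S : Fin 4 → Mtx}
    (h : Jet φ x₀ y₀ A S) (hφ : ∀ x, φ x = φ' x) : Jet φ' x₀ y₀ A S := by
  have : φ = φ' := funext hφ
  rwa [this] at h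

lemma J_comp {φ ψ : Pt → Pt} (hφ : ContDiff ℝ (⊤ : ℕ∞) φ) (hψ : ContDiff ℝ (⊤ : ℕ∞) ψ) (x : Pt) (k a : Fin 4) :
    J (fun y => ψ (φ y)) x k a = ∑ m, J ψ (φ x) k m * J φ x m a :=
  pd_comp (diffAt (contDiff_comp_component hψ k) _) (diffAtV hφ x) a

lemma Jet.comp {φ ψ : Pt → Pt} {x₀ y₀ z₀ : Pt} {A S A' S'}
    (h2 : Jet ψ y₀ z₀ A' S') (h1 : Jet φ x₀ y₀ A S) :
    Jet (fun x => ψ (φ x)) x₀ z₀ (fun k a => ∑ m, A' k m * A m a)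
      (fun k a c => ∑ m, ((∑ n, S' k m n * A n c) * A m a + A' k m * S m a c)) := by
  have hsm := h2.smooth.comp h1.smooth
  refine ⟨hsm, by simp [h1.val, h2.val], ?_, ?_⟩
  · intro k a
    rw [J_comp h1.smooth h2.smooth, h1.val]
    exact Finset.sum_congr rfl fun m _ => by rw [h2.jac k m, h1.jac m a]
  · intro k a c
    have hJc : ∀ x, J (fun y => ψ (φ y)) x k a = ∑ m, J ψ (φ x) k m * J φ x m a :=
      fun x => J_comp h1.smooth h2.smooth x k a
    rw [pd_congr hJc c x₀]
    have hd1 : ∀ m : Fin 4, DifferentiableAt ℝ (fun x => J ψ (φ x) k m) x₀ :=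
      fun m => diffAt ((contDiff_J h2.smooth k m).comp h1.smooth) x₀
    have hd2 : ∀ m : Fin 4, DifferentiableAt ℝ (fun x => J φ x m a) x₀ :=
      fun m => diffAt (contDiff_J h1.smooth m a) x₀
    rw [pd_sum (fun m _ => (hd1 m).fun_mul (hd2 m)) c]
    refine Finset.sum_congr rfl fun m _ => ?_
    rw [pd_mul (hd1 m) (hd2 m) c]
    have hcomp : pd (fun x => J ψ (φ x) k m) c x₀ = ∑ n, pd (fun y => J ψ y k m) n (φ x₀) * J φ x₀ n c :=
      pd_comp (diffAt (contDiff_J h2.smooth k m) _) (diffAtV h1.smooth x₀) c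
    rw [hcomp, h1.val, h1.snd m a c, h2.jac k m]
    have : ∑ n, pd (fun y => J ψ y k m) n y₀ * J φ x₀ n c = ∑ n, S' k m n * A n c := by
      refine Finset.sum_congr rfl fun n _ => ?_
      rw [h1.jac n c]
      congr 1
      exact h2.snd k m n
    rw [this, h1.jac m a]
    ring

lemma sum_idM_mul (f : Fin 4 → ℝ) (k : Fin 4) : ∑ m, idM k m * f m = f k := by
  simp [idM]

lemma sum_mul_idM (f : Fin 4 → ℝ) (a : Fin 4) : ∑ m, f m * idM m a = f a := by
  simp [idM]

lemma Jet.compId {φ ψ : Pt → Pt} {S₁ S₂ : Fin 4 → Mtx}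
    (h2 : Jet ψ 0 0 idM S₂) (h1 : Jet φ 0 0 idM S₁) :
    Jet (fun x => ψ (φ x)) 0 0 idM (fun k a c => S₁ k a c + S₂ k a c) := by
  refine (h2.comp h1).congrS (fun k a => ?_) (fun k a c => ?_)
  · exact sum_idM_mul (fun m => idM m a) k
  · have e1 : ∀ m : Fin 4, (∑ n, S₂ k m n * idM n c) = S₂ k m c :=
      fun m => sum_mul_idM (fun n => S₂ k m n) c
    simp only [e1]
    rw [Finset.sum_add_distrib]
    rw [sum_mul_idM (fun m => S₂ k m c) a, sum_idM_mul (fun m => S₁ m a c) k]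
    ring

/-- Affine maps. -/
def affF (b : Pt) (M : Mtx) : Pt → Pt := fun x k => b k + ∑ m, M k m * x m

lemma contDiff_coord (m : Fin 4) : ContDiff ℝ (⊤ : ℕ∞) (fun x : Pt => x m) :=
  contDiff_pi.mp contDiff_id m

lemma contDiff_affF (b : Pt) (M : Mtx) : ContDiff ℝ (⊤ : ℕ∞) (affF b M) := by
  refine contDiff_pi.mpr fun k => ?_
  exact contDiff_const.add (ContDiff.sum fun m _ => contDiff_const.mul (contDiff_coord m))

lemma J_affF (b : Pt) (M : Mtx) (x : Pt) (k a : Fin 4) : J (affF b M) x k a = M k a := by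
  have hd : ∀ m ∈ (Finset.univ : Finset (Fin 4)), DifferentiableAt ℝ (fun y : Pt => M k m * y m) x :=
    fun m _ => diffAt (contDiff_const.mul (contDiff_coord m)) x
  have h0 : J (affF b M) x k a
      = pd (fun y : Pt => (fun _ => b k) y + (fun y : Pt => ∑ m, M k m * y m) y) a x := rfl
  rw [h0, pd_add (differentiableAt_const _) (diffAt (ContDiff.sum fun m _ => contDiff_const.mul (contDiff_coord m)) x),
    pd_const, pd_sum hd a]
  have h1 : ∀ m : Fin 4, pd (fun y : Pt => M k m * y m) a x = M k m * (if m = a then 1 else 0) := by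
    intro m
    rw [pd_const_mul (diffAt (contDiff_coord m) x), pd_coord]
  simp only [h1]
  simp

lemma Jet.affine (b : Pt) (M : Mtx) (x₀ : Pt) :
    Jet (affF b M) x₀ (affF b M x₀) M (fun _ _ _ => 0) := by
  refine ⟨contDiff_affF b M, rfl, fun k a => J_affF b M x₀ k a, fun k a c => ?_⟩
  rw [pd_congr (fun x => J_affF b M x k a) c x₀, pd_const]

end NFC
end
noncomputable section
namespace NFC

/-- Bounded gadget with `u(0)=0`, `u'(0)=c`, `u ≥ -1/8`. -/
def uu (c s : ℝ) : ℝ := c * s / (1 + 16 * c^2 * s^2)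

lemma uu_den_pos (c s : ℝ) : (0:ℝ) < 1 + 16 * c^2 * s^2 := by positivity

lemma uu_ge (c s : ℝ) : -(1/8) ≤ uu c s := by
  rw [uu, le_div_iff₀ (uu_den_pos c s)]
  nlinarith [sq_nonneg (c*s + 1/4)]

lemma uu_zero_left (s : ℝ) : uu 0 s = 0 := by simp [uu]

lemma uu_zero_right (c : ℝ) : uu c 0 = 0 := by simp [uu]

lemma contDiff_uu1 (c : ℝ) : ContDiff ℝ (⊤ : ℕ∞) (uu c) := by
  refine ContDiff.div ?_ ?_ (fun s => ne_of_gt (uu_den_pos c s))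
  · exact contDiff_const.mul contDiff_id
  · exact contDiff_const.add (contDiff_const.mul (contDiff_id.pow 2))

lemma contDiff_uuc (c : ℝ) (j : Fin 4) : ContDiff ℝ (⊤ : ℕ∞) (fun x : Pt => uu c (x j)) :=
  (contDiff_uu1 c).comp (contDiff_coord j)

lemma deriv_uu_zero (c : ℝ) : deriv (uu c) 0 = c := by
  have h1 : HasDerivAt (fun s : ℝ => c * s) c 0 := by
    simpa using (hasDerivAt_id (0:ℝ)).const_mul c
  have h2 : HasDerivAt (fun s : ℝ => 1 + 16 * c^2 * s^2) 0 0 := by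
    have h3 := ((hasDerivAt_pow 2 (0:ℝ)).const_mul (16*c^2)).const_add 1
    simpa using h3
  have h4 := h1.fun_div h2 (by norm_num)
  have h5 : uu c = fun s => c * s / (1 + 16 * c^2 * s^2) := rfl
  rw [h5]
  simpa using h4.deriv

/-- pd of a 1D function composed with a coordinate. -/
lemma pd_comp_coord (j a : Fin 4) {h : ℝ → ℝ} {x : Pt} (hh : DifferentiableAt ℝ h (x j)) :
    pd (fun y => h (y j)) a x = deriv h (x j) * (if j = a then 1 else 0) := by
  have hc : (fun y : Pt => h (y j)) = h ∘ (fun y : Pt => y j) := rfl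
  have hj : DifferentiableAt ℝ (fun y : Pt => y j) x := diffAt (contDiff_coord j) x
  rw [pd, hc, fderiv_comp x hh hj]
  have h6 : fderiv ℝ (fun y : Pt => y j) x (ee a) = if j = a then 1 else 0 := by
    have := pd_coord j a x
    rwa [pd] at this
  show fderiv ℝ h (x j) (fderiv ℝ (fun y : Pt => y j) x (ee a)) = _
  rw [h6]
  by_cases hja : j = a
  · simp [hja, fderiv_apply_one_eq_deriv]
  · simp [hja]

def Umap (CU : Fin 4 → ℝ) (x : Pt) : ℝ := ∑ j, uu (CU j) (x j)

def Wmap (OW : Mtx) (x : Pt) : ℝ := (1/2) * ∑ i, ∑ j, OW i j * x i * x j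

lemma contDiff_Umap (CU : Fin 4 → ℝ) : ContDiff ℝ (⊤ : ℕ∞) (Umap CU) :=
  ContDiff.sum fun j _ => contDiff_uuc (CU j) j

lemma contDiff_Wmap (OW : Mtx) : ContDiff ℝ (⊤ : ℕ∞) (Wmap OW) := by
  refine contDiff_const.mul (ContDiff.sum fun i _ => ContDiff.sum fun j _ => ?_)
  exact (contDiff_const.mul (contDiff_coord i)).mul (contDiff_coord j)

lemma Umap_zero (CU : Fin 4 → ℝ) : Umap CU 0 = 0 := by
  simp [Umap, Pi.zero_apply, uu_zero_right]

lemma Wmap_zero (OW : Mtx) : Wmap OW 0 = 0 := by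
  have : ∀ i j : Fin 4, OW i j * (0:Pt) i * (0:Pt) j = 0 := by intro i j; simp [Pi.zero_apply]
  simp [Wmap, this]

lemma Umap_ge (CU : Fin 4 → ℝ) (x : Pt) : -(1/2) ≤ Umap CU x := by
  have h1 : ∀ j ∈ (Finset.univ : Finset (Fin 4)), -(1/8 : ℝ) ≤ uu (CU j) (x j) :=
    fun j _ => uu_ge _ _
  have h2 := Finset.sum_le_sum h1
  simp only [Finset.sum_const, Finset.card_univ, Fintype.card_fin] at h2
  have h3 : (4:ℕ) • (-(1/8):ℝ) = -(1/2) := by norm_num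
  rw [h3] at h2
  exact h2

lemma one_add_Umap_pos (CU : Fin 4 → ℝ) (x : Pt) : (0:ℝ) < 1 + Umap CU x := by
  have := Umap_ge CU x; linarith

lemma one_add_Umap_ne (CU : Fin 4 → ℝ) (x : Pt) : 1 + Umap CU x ≠ 0 :=
  ne_of_gt (one_add_Umap_pos CU x)

lemma pd_Umap (CU : Fin 4 → ℝ) (a : Fin 4) (x : Pt) :
    pd (Umap CU) a x = deriv (uu (CU a)) (x a) := by
  have h0 : pd (Umap CU) a x = ∑ j, pd (fun y : Pt => uu (CU j) (y j)) a x :=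
    pd_sum (fun j _ => diffAt (contDiff_uuc (CU j) j) x) a
  rw [h0]
  have h1 : ∀ j : Fin 4, pd (fun y : Pt => uu (CU j) (y j)) a x
      = deriv (uu (CU j)) (x j) * (if j = a then 1 else 0) :=
    fun j => pd_comp_coord j a (((contDiff_uu1 (CU j)).differentiable (by simp)).differentiableAt)
  simp only [h1, mul_ite, mul_one, mul_zero]
  simp

lemma pd_Umap_zero (CU : Fin 4 → ℝ) (a : Fin 4) : pd (Umap CU) a 0 = CU a := by
  rw [pd_Umap]
  show deriv (uu (CU a)) ((0:Pt) a) = CU a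
  rw [Pi.zero_apply, deriv_uu_zero]

lemma pd_Wmap (OW : Mtx) (a : Fin 4) (x : Pt) :
    pd (Wmap OW) a x = (1/2) * ((∑ j, OW a j * x j) + (∑ i, OW i a * x i)) := by
  have hd : ∀ i j : Fin 4, DifferentiableAt ℝ (fun y : Pt => OW i j * y i * y j) x :=
    fun i j => diffAt ((contDiff_const.mul (contDiff_coord i)).mul (contDiff_coord j)) x
  have h0 : pd (Wmap OW) a x
      = (1/2) * pd (fun y : Pt => ∑ i, ∑ j, OW i j * y i * y j) a x := by
    exact pd_const_mul (diffAt (ContDiff.sum fun i _ => ContDiff.sum fun j _ =>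
      (contDiff_const.mul (contDiff_coord i)).mul (contDiff_coord j)) x) (1/2) a
  rw [h0]
  have h1 : pd (fun y : Pt => ∑ i, ∑ j, OW i j * y i * y j) a x
      = ∑ i, ∑ j, pd (fun y : Pt => OW i j * y i * y j) a x := by
    rw [pd_sum (fun i _ => diffAt (ContDiff.sum fun j _ =>
      (contDiff_const.mul (contDiff_coord i)).mul (contDiff_coord j)) x) a]
    exact Finset.sum_congr rfl fun i _ => pd_sum (fun j _ => hd i j) a
  rw [h1]
  have h2 : ∀ i j : Fin 4, pd (fun y : Pt => OW i j * y i * y j) a x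
      = OW i j * ((if i = a then 1 else 0) * x j + x i * (if j = a then 1 else 0)) := by
    intro i j
    have hc : (fun y : Pt => OW i j * y i * y j) = (fun y : Pt => OW i j * (y i * y j)) := by
      funext y; ring
    rw [hc, pd_const_mul ((diffAt (contDiff_coord i) x).fun_mul (diffAt (contDiff_coord j) x)) _ a,
      pd_mul (diffAt (contDiff_coord i) x) (diffAt (contDiff_coord j) x) a, pd_coord, pd_coord]
    ring
  have h3 : ∑ i, ∑ j, pd (fun y : Pt => OW i j * y i * y j) a x
      = ∑ i, ∑ j, ((if i = a then OW i j * x j else 0) + (if j = a then OW i j * x i else 0)) := by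
    refine Finset.sum_congr rfl fun i _ => Finset.sum_congr rfl fun j _ => ?_
    rw [h2 i j]
    by_cases hi : i = a <;> by_cases hj : j = a <;> simp [hi, hj] <;> ring
  rw [h3]
  have h4 : ∀ i : Fin 4, ∑ j, ((if i = a then OW i j * x j else 0) + (if j = a then OW i j * x i else 0))
      = (if i = a then ∑ j, OW i j * x j else 0) + OW i a * x i := by
    intro i
    rw [Finset.sum_add_distrib]
    congr 1
    · by_cases hi : i = a <;> simp [hi]
    · simp
  simp only [h4]
  rw [Finset.sum_add_distrib]
  simp

end NFC
end
noncomputable section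
namespace NFC

def beta (k : Fin 4) (CU : Fin 4 → ℝ) (OW : Mtx) : Pt → Pt :=
  fun x j => if j = k then x k * (1 + Umap CU x) + Wmap OW x else x j

def betaInv (k : Fin 4) (CU : Fin 4 → ℝ) (OW : Mtx) : Pt → Pt :=
  fun y j => if j = k then (y k - Wmap OW y) / (1 + Umap CU y) else y j

lemma contDiff_beta (k : Fin 4) (CU : Fin 4 → ℝ) (OW : Mtx) : ContDiff ℝ (⊤ : ℕ∞) (beta k CU OW) := by
  refine contDiff_pi.mpr fun j => ?_
  by_cases hj : j = k
  · simp only [beta, hj, if_true]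
    exact ((contDiff_coord k).mul (contDiff_const.add (contDiff_Umap CU))).add (contDiff_Wmap OW)
  · simp only [beta, hj, if_false]
    exact contDiff_coord j

lemma contDiff_betaInv (k : Fin 4) (CU : Fin 4 → ℝ) (OW : Mtx) : ContDiff ℝ (⊤ : ℕ∞) (betaInv k CU OW) := by
  refine contDiff_pi.mpr fun j => ?_
  by_cases hj : j = k
  · simp only [betaInv, hj, if_true]
    exact ((contDiff_coord k).sub (contDiff_Wmap OW)).div
      (contDiff_const.add (contDiff_Umap CU)) (fun x => one_add_Umap_ne CU x)
  · simp only [betaInv, hj, if_false]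
    exact contDiff_coord j

/-- `Umap` only depends on coordinates where `CU` is non-zero; in particular it is
unchanged by modifying coordinate `k` when `CU k = 0`. -/
lemma Umap_invariant (k : Fin 4) (CU : Fin 4 → ℝ) (hCU : CU k = 0) {x y : Pt}
    (hxy : ∀ j, j ≠ k → x j = y j) : Umap CU x = Umap CU y := by
  refine Finset.sum_congr rfl fun j _ => ?_
  by_cases hj : j = k
  · rw [hj, hCU, uu_zero_left, uu_zero_left]
  · rw [hxy j hj]

lemma Wmap_invariant (k : Fin 4) (OW : Mtx) (hOW : ∀ j, OW k j = 0) (hOW' : ∀ j, OW j k = 0)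
    {x y : Pt} (hxy : ∀ j, j ≠ k → x j = y j) : Wmap OW x = Wmap OW y := by
  unfold Wmap
  congr 1
  refine Finset.sum_congr rfl fun i _ => Finset.sum_congr rfl fun j _ => ?_
  by_cases hi : i = k
  · rw [hi, hOW j]; ring
  · by_cases hj : j = k
    · rw [hj, hOW' i]; ring
    · rw [hxy i hi, hxy j hj]

lemma beta_offdiag (k : Fin 4) (CU : Fin 4 → ℝ) (OW : Mtx) (x : Pt) :
    ∀ j, j ≠ k → beta k CU OW x j = x j := by
  intro j hj; simp [beta, hj]

lemma betaInv_offdiag (k : Fin 4) (CU : Fin 4 → ℝ) (OW : Mtx) (y : Pt) :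
    ∀ j, j ≠ k → betaInv k CU OW y j = y j := by
  intro j hj; simp [betaInv, hj]

lemma isDiffeo_beta (k : Fin 4) (CU : Fin 4 → ℝ) (OW : Mtx) (hCU : CU k = 0)
    (hOW : ∀ j, OW k j = 0) (hOW' : ∀ j, OW j k = 0) : IsDiffeo (beta k CU OW) := by
  refine ⟨contDiff_beta k CU OW, betaInv k CU OW, contDiff_betaInv k CU OW, ?_, ?_⟩
  · intro x
    funext j
    by_cases hj : j = k
    · subst hj
      have hU : Umap CU (beta j CU OW x) = Umap CU x :=
        Umap_invariant j CU hCU (beta_offdiag j CU OW x)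
      have hW : Wmap OW (beta j CU OW x) = Wmap OW x :=
        Wmap_invariant j OW hOW hOW' (beta_offdiag j CU OW x)
      have hbk : beta j CU OW x j = x j * (1 + Umap CU x) + Wmap OW x := by simp [beta]
      simp only [betaInv, if_true, hU, hW, hbk]
      rw [add_sub_cancel_right, mul_div_assoc, div_self (one_add_Umap_ne CU x), mul_one]
    · rw [betaInv_offdiag _ _ _ _ j hj, beta_offdiag _ _ _ _ j hj]
  · intro y
    funext j
    by_cases hj : j = k
    · subst hj
      have hU : Umap CU (betaInv j CU OW y) = Umap CU y :=
        Umap_invariant j CU hCU (betaInv_offdiag j CU OW y)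
      have hW : Wmap OW (betaInv j CU OW y) = Wmap OW y :=
        Wmap_invariant j OW hOW hOW' (betaInv_offdiag j CU OW y)
      have hbk : betaInv j CU OW y j = (y j - Wmap OW y) / (1 + Umap CU y) := by simp [betaInv]
      simp only [beta, if_true, hU, hW, hbk]
      rw [div_mul_eq_mul_div, mul_div_assoc, div_self (one_add_Umap_ne CU y), mul_one]
      ring
    · rw [beta_offdiag _ _ _ _ j hj, betaInv_offdiag _ _ _ _ j hj]

lemma pd_linear (v : Fin 4 → ℝ) (c : Fin 4) (x : Pt) :
    pd (fun y : Pt => ∑ j, v j * y j) c x = v c := by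
  rw [pd_sum (fun j _ => diffAt (contDiff_const.mul (contDiff_coord j)) x) c]
  have h1 : ∀ j : Fin 4, pd (fun y : Pt => v j * y j) c x = v j * (if j = c then 1 else 0) := by
    intro j
    rw [pd_const_mul (diffAt (contDiff_coord j) x), pd_coord]
  simp only [h1, mul_ite, mul_one, mul_zero]
  simp

lemma J_beta (k : Fin 4) (CU : Fin 4 → ℝ) (OW : Mtx) (x : Pt) (j a : Fin 4) :
    J (beta k CU OW) x j a =
      if j = k then
        x k * pd (Umap CU) a x + (1 + Umap CU x) * (if k = a then 1 else 0) + pd (Wmap OW) a x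
      else (if j = a then 1 else 0) := by
  by_cases hj : j = k
  · subst hj
    simp only [if_true]
    have hfun : ∀ y : Pt, beta j CU OW y j
        = (fun y : Pt => y j * (1 + Umap CU y) + Wmap OW y) y := by
      intro y; simp [beta]
    have hd1 : DifferentiableAt ℝ (fun y : Pt => y j * (1 + Umap CU y)) x :=
      (diffAt (contDiff_coord j) x).mul (diffAt (contDiff_const.add (contDiff_Umap CU)) x)
    have hd2 : DifferentiableAt ℝ (Wmap OW) x := diffAt (contDiff_Wmap OW) x
    have h0 : J (beta j CU OW) x j a
        = pd (fun y : Pt => y j * (1 + Umap CU y) + Wmap OW y) a x := pd_congr hfun a x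
    rw [h0, pd_add hd1 hd2 a,
      pd_mul (diffAt (contDiff_coord j) x) (diffAt (contDiff_const.add (contDiff_Umap CU)) x) a,
      pd_coord]
    have hpd1 : pd (fun y : Pt => 1 + Umap CU y) a x = pd (Umap CU) a x := by
      rw [pd_add (differentiableAt_const 1) (diffAt (contDiff_Umap CU) x) a, pd_const]
      ring
    rw [hpd1]
    try ring
  · simp only [hj, if_false]
    have hfun : ∀ y : Pt, beta k CU OW y j = (fun y : Pt => y j) y := by
      intro y; simp [beta, hj]
    have h0 : J (beta k CU OW) x j a = pd (fun y : Pt => y j) a x := pd_congr hfun a x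
    rw [h0, pd_coord]

lemma contDiff_J_beta_diag (k : Fin 4) (CU : Fin 4 → ℝ) (OW : Mtx) (a : Fin 4) :
    ContDiff ℝ (⊤ : ℕ∞) (fun x => J (beta k CU OW) x k a) :=
  contDiff_J (contDiff_beta k CU OW) k a

lemma Jet_beta (k : Fin 4) (CU : Fin 4 → ℝ) (OW : Mtx) (hOWsym : ∀ i j, OW i j = OW j i) :
    Jet (beta k CU OW) 0 0 idM
      (fun j a c => if j = k then
        ((if k = a then 1 else 0) * CU c + (if k = c then 1 else 0) * CU a + OW a c) else 0) := by
  have hUsm := contDiff_Umap CU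
  have hWsm := contDiff_Wmap OW
  refine ⟨contDiff_beta k CU OW, ?_, ?_, ?_⟩
  · funext j
    by_cases hj : j = k <;>
      simp [beta, hj, Umap_zero, Wmap_zero, Pi.zero_apply]
  · intro j a
    rw [J_beta]
    by_cases hj : j = k
    · subst hj
      simp only [if_true]
      rw [pd_Wmap]
      simp [Umap_zero, Pi.zero_apply, idM]
    · simp [hj, idM]
  · intro j a c
    by_cases hj : j = k
    · subst hj
      have hfun : ∀ x : Pt, J (beta j CU OW) x j a
          = (fun x : Pt => x j * pd (Umap CU) a x
              + (1 + Umap CU x) * (if j = a then 1 else 0) + pd (Wmap OW) a x) x := by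
        intro x
        rw [J_beta]
        simp
      rw [pd_congr hfun c 0]
      have hdU : DifferentiableAt ℝ (fun x => pd (Umap CU) a x) 0 :=
        diffAt (contDiff_pd hUsm a) 0
      have hd1 : DifferentiableAt ℝ (fun x : Pt => x j * pd (Umap CU) a x) 0 :=
        (diffAt (contDiff_coord j) 0).mul hdU
      have hd2 : DifferentiableAt ℝ
          (fun x : Pt => (1 + Umap CU x) * (if j = a then 1 else 0)) 0 :=
        (diffAt (contDiff_const.add hUsm) 0).mul (differentiableAt_const _)
      have hd3 : DifferentiableAt ℝ (fun x => pd (Wmap OW) a x) 0 :=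
        diffAt (contDiff_pd hWsm a) 0
      rw [pd_add (hd1.fun_add hd2) hd3 c, pd_add hd1 hd2 c]
      -- term 1
      have hT1 : pd (fun x : Pt => x j * pd (Umap CU) a x) c 0
          = CU a * (if j = c then 1 else 0) := by
        rw [pd_mul (diffAt (contDiff_coord j) 0) hdU c, pd_coord, pd_Umap_zero]
        simp [Pi.zero_apply]
      -- term 2
      have hT2 : pd (fun x : Pt => (1 + Umap CU x) * (if j = a then 1 else 0)) c 0
          = (if j = a then 1 else 0) * CU c := by
        rw [pd_mul (diffAt (contDiff_const.add hUsm) 0) (differentiableAt_const _) c, pd_const]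
        have hpd1 : pd (fun y : Pt => 1 + Umap CU y) c 0 = CU c := by
          rw [pd_add (differentiableAt_const 1) (diffAt hUsm 0) c, pd_const, pd_Umap_zero]
          ring
        rw [hpd1]
        ring
      -- term 3
      have hT3 : pd (fun x => pd (Wmap OW) a x) c 0 = OW a c := by
        have hfun3 : ∀ x : Pt, pd (Wmap OW) a x
            = (fun x : Pt => (1/2) * ((∑ i, OW a i * x i) + (∑ i, OW i a * x i))) x := by
          intro x
          rw [pd_Wmap]
        rw [pd_congr hfun3 c 0]
        have hda : DifferentiableAt ℝ (fun x : Pt => ∑ i, OW a i * x i) 0 :=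
          diffAt (ContDiff.sum fun i _ => contDiff_const.mul (contDiff_coord i)) 0
        have hdb : DifferentiableAt ℝ (fun x : Pt => ∑ i, OW i a * x i) 0 :=
          diffAt (ContDiff.sum fun i _ => contDiff_const.mul (contDiff_coord i)) 0
        rw [pd_const_mul (hda.fun_add hdb) _ c, pd_add hda hdb c, pd_linear, pd_linear,
          hOWsym c a]
        ring
      rw [hT1, hT2, hT3]
      simp only [if_true]
      ring
    · have hfun : ∀ x : Pt, J (beta k CU OW) x j a
          = (fun _ : Pt => (if j = a then (1:ℝ) else 0)) x := by
        intro x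
        rw [J_beta]
        simp [hj]
      rw [pd_congr hfun c 0, pd_const]
      simp [hj]

end NFC
end
noncomputable section
namespace NFC

lemma idM_symm (i j : Fin 4) : idM i j = idM j i := by
  simp [idM, eq_comm]

lemma IsDiffeo.compD {φ ψ : Pt → Pt} (hψ : IsDiffeo ψ) (hφ : IsDiffeo φ) :
    IsDiffeo (fun x => ψ (φ x)) := by
  obtain ⟨hψs, ψi, hψis, hψl, hψr⟩ := hψ
  obtain ⟨hφs, φi, hφis, hφl, hφr⟩ := hφ
  refine ⟨hψs.comp hφs, fun y => φi (ψi y), hφis.comp hψis, ?_, ?_⟩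
  · intro x; simp [hψl (φ x), hφl x]
  · intro y; simp [hφr (ψi y), hψr y]

lemma affF_comp (b' b : Pt) (M' M : Mtx) (x : Pt) (k : Fin 4) :
    affF b' M' (affF b M x) k
      = b' k + (∑ m, M' k m * b m) + ∑ n, (∑ m, M' k m * M m n) * x n := by
  show b' k + ∑ m, M' k m * (b m + ∑ n, M m n * x n) = _
  have h1 : ∀ m : Fin 4, M' k m * (b m + ∑ n, M m n * x n)
      = M' k m * b m + ∑ n, M' k m * (M m n * x n) := by
    intro m; rw [mul_add, Finset.mul_sum]
  rw [Finset.sum_congr rfl fun m _ => h1 m, Finset.sum_add_distrib, Finset.sum_comm]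
  have h2 : ∀ n : Fin 4, ∑ m, M' k m * (M m n * x n) = (∑ m, M' k m * M m n) * x n := by
    intro n; rw [Finset.sum_mul]; exact Finset.sum_congr rfl fun m _ => by ring
  rw [Finset.sum_congr rfl fun n _ => h2 n]
  ring

lemma sum_idM_mul' (f : Fin 4 → ℝ) (a : Fin 4) : ∑ n, idM a n * f n = f a := sum_idM_mul f a

lemma affF_inverse {b b' : Pt} {M M' : Mtx}
    (hMM : ∀ k n, ∑ m, M' k m * M m n = idM k n)
    (hb : ∀ k, b' k + ∑ m, M' k m * b m = 0) :
    Function.LeftInverse (affF b' M') (affF b M) := by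
  intro x
  funext k
  rw [affF_comp]
  have h1 : ∑ n, (∑ m, M' k m * M m n) * x n = x k := by
    rw [Finset.sum_congr rfl fun n _ => by rw [hMM k n]]
    exact sum_idM_mul (fun n => x n) k
  rw [h1]
  have := hb k
  show b' k + ∑ m, M' k m * b m + x k = x k
  rw [this]
  ring

lemma isDiffeo_affF {b b' : Pt} {M M' : Mtx}
    (hMM : ∀ k n, ∑ m, M' k m * M m n = idM k n)
    (hMM' : ∀ k n, ∑ m, M k m * M' m n = idM k n)
    (hb : ∀ k, b' k + ∑ m, M' k m * b m = 0)
    (hb' : ∀ k, b k + ∑ m, M k m * b' m = 0) :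
    IsDiffeo (affF b M) :=
  ⟨contDiff_affF b M, affF b' M', contDiff_affF b' M',
    affF_inverse hMM hb, affF_inverse hMM' hb'⟩

lemma affF_zero (M : Mtx) : affF (0:Pt) M 0 = 0 := by
  funext k
  show (0:Pt) k + ∑ m, M k m * (0:Pt) m = (0:Pt) k
  simp

lemma Jet.linear0 (M : Mtx) : Jet (affF 0 M) 0 0 M (fun _ _ _ => 0) := by
  have h := Jet.affine (0:Pt) M 0
  rwa [affF_zero M] at h

/-- Conjugation of an id-jet map by a linear map. -/
lemma Jet.conj {ζ : Pt → Pt} {Sζ : Fin 4 → Mtx} {M M' : Mtx}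
    (hζ : Jet ζ 0 0 idM Sζ)
    (hMM : ∀ k n, ∑ m, M' k m * M m n = idM k n) :
    Jet (fun x => affF 0 M' (ζ (affF 0 M x))) 0 0 idM
      (fun k a c => ∑ m, M' k m * (∑ m', (∑ n, Sζ m m' n * M n c) * M m' a)) := by
  have hR := Jet.linear0 M
  have hR' := Jet.linear0 M'
  have h1 := hζ.comp hR
  have h2 := hR'.comp h1
  have hA1 : ∀ m a : Fin 4, (∑ m', idM m m' * M m' a) = M m a :=
    fun m a => sum_idM_mul (fun m' => M m' a) m
  refine h2.congrS (fun k a => ?_) (fun k a c => ?_)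
  · rw [Finset.sum_congr rfl fun m _ => by rw [hA1 m a]]
    exact hMM k a
  · refine Finset.sum_congr rfl fun m _ => ?_
    have e1 : (∑ n, (0:ℝ) * (∑ m', idM n m' * M m' c)) = 0 := by simp
    rw [e1, zero_mul, zero_add]
    congr 1
    refine Finset.sum_congr rfl fun m' _ => ?_
    rw [mul_zero, add_zero]

end NFC
end
noncomputable section
namespace NFC
open Matrix

def etaM : Matrix (Fin 4) (Fin 4) ℝ := Matrix.of minkowski

lemma conj_entry (G : Mtx) (B : Matrix (Fin 4) (Fin 4) ℝ) (i j : Fin 4) :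
    (Bᵀ * Matrix.of G * B) i j = ∑ k, ∑ l, B k i * G k l * B l j := by
  rw [Matrix.mul_apply]
  have h1 : ∀ l : Fin 4, (Bᵀ * Matrix.of G) i l * B l j
      = ∑ k, B k i * G k l * B l j := by
    intro l
    rw [Matrix.mul_apply, Finset.sum_mul]
    exact Finset.sum_congr rfl fun k _ => by
      simp [Matrix.transpose_apply, Matrix.of_apply]
  rw [Finset.sum_congr rfl fun l _ => h1 l]
  exact Finset.sum_comm

lemma sig_matrix {G : Mtx} {P : Matrix (Fin 4) (Fin 4) ℝ}
    (h : ∀ i j, ∑ k, ∑ l, P k i * G k l * P l j = minkowski i j) :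
    Pᵀ * Matrix.of G * P = etaM := by
  ext i j
  rw [conj_entry, h i j]
  rfl

lemma etaM_mul_self : etaM * etaM = 1 := by
  ext i j
  rw [Matrix.mul_apply]
  fin_cases i <;> fin_cases j <;>
    simp [etaM, minkowski, Fin.sum_univ_four, Matrix.one_apply] <;> norm_num

lemma isUnit_etaM_det : IsUnit etaM.det :=
  IsUnit.of_mul_eq_one _ (by rw [← Matrix.det_mul, etaM_mul_self, Matrix.det_one])

lemma isUnit_sig_det {G : Mtx} (hs : IsLorentzSig G) : IsUnit (Matrix.of G).det := by
  obtain ⟨P, hPdet, hP⟩ := hs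
  have h1 := sig_matrix hP
  have h2 : Pᵀ.det * (Matrix.of G).det * P.det = etaM.det := by
    rw [← Matrix.det_mul, ← Matrix.det_mul, h1]
  refine isUnit_of_dvd_unit ?_ (h2 ▸ isUnit_etaM_det)
  exact ⟨Pᵀ.det * P.det, by ring⟩

lemma lorentz_transport {G1 G2 : Mtx} (h1 : IsLorentzSig G1) (h2 : IsLorentzSig G2) :
    ∃ A : Matrix (Fin 4) (Fin 4) ℝ, IsUnit A.det ∧
      ∀ m b, ∑ k, ∑ l, A k m * G2 k l * A l b = G1 m b := by
  obtain ⟨P, hPdet, hP⟩ := h1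
  obtain ⟨Q, hQdet, hQ⟩ := h2
  have hPm := sig_matrix hP
  have hQm := sig_matrix hQ
  refine ⟨Q * P⁻¹, ?_, ?_⟩
  · rw [Matrix.det_mul]
    exact hQdet.mul (Matrix.isUnit_nonsing_inv_det P hPdet)
  · intro m b
    rw [← conj_entry]
    have key : (Q * P⁻¹)ᵀ * Matrix.of G2 * (Q * P⁻¹) = Matrix.of G1 := by
      have hPP : P * P⁻¹ = 1 := Matrix.mul_nonsing_inv P hPdet
      calc (Q * P⁻¹)ᵀ * Matrix.of G2 * (Q * P⁻¹)
          = (P⁻¹)ᵀ * (Qᵀ * Matrix.of G2 * Q) * P⁻¹ := by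
            rw [Matrix.transpose_mul]
            noncomm_ring
        _ = (P⁻¹)ᵀ * (Pᵀ * Matrix.of G1 * P) * P⁻¹ := by rw [hQm, hPm]
        _ = (P * P⁻¹)ᵀ * Matrix.of G1 * (P * P⁻¹) := by
            rw [Matrix.transpose_mul]
            noncomm_ring
        _ = Matrix.of G1 := by rw [hPP]; simp
    rw [key]
    rfl

end NFC
end
noncomputable section
namespace NFC

lemma fin4_succ_ne (ℓ : Fin 4) : (ℓ + 1 : Fin 4) ≠ ℓ := by
  intro h
  have h2 := congrArg Fin.val h
  rw [Fin.val_add] at h2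
  omega

lemma idM_diag (ℓ : Fin 4) : idM ℓ ℓ = 1 := by simp [idM]

lemma idM_succ (ℓ : Fin 4) : idM ℓ (ℓ+1) = 0 := by
  simp only [idM, ite_eq_right_iff]
  exact fun h => absurd h.symm (fin4_succ_ne ℓ)

lemma idM_succ' (ℓ : Fin 4) : idM (ℓ+1) ℓ = 0 := by
  rw [idM_symm]; exact idM_succ ℓ

lemma sum_idMT (f : Fin 4 → ℝ) (t : Fin 4) : ∑ m, idM m t * f m = f t := by
  have h : ∀ m : Fin 4, idM m t * f m = idM t m * f m := fun m => by rw [idM_symm]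
  rw [Finset.sum_congr rfl fun m _ => h m]
  exact sum_idM_mul f t

/-- The conjugating shear matrices. -/
def MkM (ℓ : Fin 4) : Mtx := fun i m => idM i m + idM i (ℓ+1) * idM m ℓ
def MkM' (ℓ : Fin 4) : Mtx := fun i m => idM i m - idM i (ℓ+1) * idM m ℓ

lemma MkM_inv (ℓ : Fin 4) (k n : Fin 4) : ∑ m, MkM' ℓ k m * MkM ℓ m n = idM k n := by
  have h : ∀ m : Fin 4, MkM' ℓ k m * MkM ℓ m n
      = (idM k m * idM m n + idM k m * (idM m (ℓ+1) * idM n ℓ))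
        - (idM k (ℓ+1) * (idM m ℓ * idM m n) + idM k (ℓ+1) * idM m ℓ * idM m (ℓ+1) * idM n ℓ) := by
    intro m; simp only [MkM, MkM']; ring
  rw [Finset.sum_congr rfl fun m _ => h m, Finset.sum_sub_distrib, Finset.sum_add_distrib,
    Finset.sum_add_distrib]
  rw [sum_idM_mul (fun m => idM m n) k, sum_idM_mul (fun m => idM m (ℓ+1) * idM n ℓ) k]
  have h2 : ∑ m, idM k (ℓ+1) * (idM m ℓ * idM m n) = idM k (ℓ+1) * idM ℓ n := by
    rw [← Finset.mul_sum, sum_idMT (fun m => idM m n) ℓ]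
  have h3 : ∑ m, idM k (ℓ+1) * idM m ℓ * idM m (ℓ+1) * idM n ℓ = 0 := by
    have h4 : ∀ m : Fin 4, idM k (ℓ+1) * idM m ℓ * idM m (ℓ+1) * idM n ℓ
        = (idM k (ℓ+1) * idM n ℓ) * (idM m ℓ * idM m (ℓ+1)) := fun m => by ring
    rw [Finset.sum_congr rfl fun m _ => h4 m, ← Finset.mul_sum,
      sum_idMT (fun m => idM m (ℓ+1)) ℓ, idM_succ, mul_zero]
  rw [h2, h3, idM_symm ℓ n]
  ring

lemma MkM_inv' (ℓ : Fin 4) (k n : Fin 4) : ∑ m, MkM ℓ k m * MkM' ℓ m n = idM k n := by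
  have h : ∀ m : Fin 4, MkM ℓ k m * MkM' ℓ m n
      = (idM k m * idM m n - idM k m * (idM m (ℓ+1) * idM n ℓ))
        + (idM k (ℓ+1) * (idM m ℓ * idM m n) - idM k (ℓ+1) * idM m ℓ * idM m (ℓ+1) * idM n ℓ) := by
    intro m; simp only [MkM, MkM']; ring
  rw [Finset.sum_congr rfl fun m _ => h m, Finset.sum_add_distrib, Finset.sum_sub_distrib,
    Finset.sum_sub_distrib]
  rw [sum_idM_mul (fun m => idM m n) k, sum_idM_mul (fun m => idM m (ℓ+1) * idM n ℓ) k]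
  have h2 : ∑ m, idM k (ℓ+1) * (idM m ℓ * idM m n) = idM k (ℓ+1) * idM ℓ n := by
    rw [← Finset.mul_sum, sum_idMT (fun m => idM m n) ℓ]
  have h3 : ∑ m, idM k (ℓ+1) * idM m ℓ * idM m (ℓ+1) * idM n ℓ = 0 := by
    have h4 : ∀ m : Fin 4, idM k (ℓ+1) * idM m ℓ * idM m (ℓ+1) * idM n ℓ
        = (idM k (ℓ+1) * idM n ℓ) * (idM m ℓ * idM m (ℓ+1)) := fun m => by ring
    rw [Finset.sum_congr rfl fun m _ => h4 m, ← Finset.mul_sum,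
      sum_idMT (fun m => idM m (ℓ+1)) ℓ, idM_succ, mul_zero]
  rw [h2, h3, idM_symm ℓ n]
  ring

section Data
variable (g : MetricField) (p p' : Pt) (A GpI : Mtx)

/-- Transported first derivatives of the metric. -/
def P3 (c a b : Fin 4) : ℝ :=
  ∑ n, ∑ k, ∑ l, pd (fun y => g y k l) n p' * A n c * A k a * A l b

def TT (c a b : Fin 4) : ℝ := pd (fun x => g x a b) c p - P3 g p' A c a b

def HH (a c b : Fin 4) : ℝ :=
  (1/2) * (TT g p p' A c a b + TT g p p' A a c b - TT g p p' A b c a)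

def Sg (m a c : Fin 4) : ℝ := ∑ j, GpI m j * HH g p p' A a c j

def cdg (m : Fin 4) : ℝ := Sg g p p' A GpI m m m / 2

def conjS (ℓ m a c : Fin 4) : ℝ :=
  (idM m ℓ - idM m (ℓ+1)) * cdg g p p' A GpI ℓ *
    ((idM (ℓ+1) c + idM c ℓ) * idM ℓ a + (idM (ℓ+1) a + idM a ℓ) * idM ℓ c)

def XX (m a c : Fin 4) : ℝ :=
  Sg g p p' A GpI m a c - ∑ ℓ, conjS g p p' A GpI ℓ m a c

/-- cross coefficients of the conjugated shear. -/
def CUz (ℓ : Fin 4) : Fin 4 → ℝ := fun j => cdg g p p' A GpI ℓ * idM j (ℓ+1)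

end Data

section DataLemmas
variable (g : MetricField) (p p' : Pt) (A GpI : Mtx)

lemma TT_symab (hsym : ∀ x a b, g x a b = g x b a) (c a b : Fin 4) :
    TT g p p' A c a b = TT g p p' A c b a := by
  unfold TT
  congr 1
  · exact pd_congr (fun x => hsym x a b) c p
  · unfold P3
    refine Finset.sum_congr rfl fun n _ => ?_
    rw [Finset.sum_comm]
    refine Finset.sum_congr rfl fun k _ => Finset.sum_congr rfl fun l _ => ?_
    rw [pd_congr (fun y => hsym y l k) n p']
    ring

lemma HH_symac (hsym : ∀ x a b, g x a b = g x b a) (a c b : Fin 4) :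
    HH g p p' A a c b = HH g p p' A c a b := by
  unfold HH
  rw [TT_symab g p p' A hsym b c a]
  ring

lemma HH_pair (hsym : ∀ x a b, g x a b = g x b a) (a c b : Fin 4) :
    HH g p p' A a c b + HH g p p' A b c a = TT g p p' A c a b := by
  unfold HH
  rw [TT_symab g p p' A hsym c b a]
  ring

lemma Sg_symac (hsym : ∀ x a b, g x a b = g x b a) (m a c : Fin 4) :
    Sg g p p' A GpI m a c = Sg g p p' A GpI m c a := by
  unfold Sg
  refine Finset.sum_congr rfl fun j _ => ?_
  rw [HH_symac g p p' A hsym a c j]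

lemma Sg_contract (hginv : ∀ b j, ∑ m, g p m b * GpI m j = idM j b) (a c b : Fin 4) :
    ∑ m, g p m b * Sg g p p' A GpI m a c = HH g p p' A a c b := by
  unfold Sg
  have h1 : ∀ m : Fin 4, g p m b * ∑ j, GpI m j * HH g p p' A a c j
      = ∑ j, g p m b * GpI m j * HH g p p' A a c j := by
    intro m
    rw [Finset.mul_sum]
    exact Finset.sum_congr rfl fun j _ => by ring
  rw [Finset.sum_congr rfl fun m _ => h1 m, Finset.sum_comm]
  have h2 : ∀ j : Fin 4, ∑ m, g p m b * GpI m j * HH g p p' A a c j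
      = idM j b * HH g p p' A a c j := by
    intro j
    rw [← Finset.sum_mul, hginv b j]
  rw [Finset.sum_congr rfl fun j _ => h2 j]
  exact sum_idMT (fun j => HH g p p' A a c j) b

lemma conjS_sum_diag (m : Fin 4) :
    ∑ ℓ, conjS g p p' A GpI ℓ m m m = Sg g p p' A GpI m m m := by
  have hkey : ∀ ℓ : Fin 4, conjS g p p' A GpI ℓ m m m
      = (idM m ℓ - idM m (ℓ+1)) * cdg g p p' A GpI ℓ *
        (2 * (idM (ℓ+1) m + idM m ℓ) * idM ℓ m) := by
    intro ℓ; unfold conjS; ring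
  rw [Finset.sum_congr rfl fun ℓ _ => hkey ℓ]
  have hterm : ∀ ℓ : Fin 4, (idM m ℓ - idM m (ℓ+1)) * cdg g p p' A GpI ℓ *
      (2 * (idM (ℓ+1) m + idM m ℓ) * idM ℓ m)
      = if ℓ = m then 2 * cdg g p p' A GpI m else 0 := by
    intro ℓ
    by_cases hℓ : ℓ = m
    · subst hℓ
      rw [if_pos rfl, idM_diag, idM_succ, idM_succ']
      ring
    · have h1 : idM ℓ m = 0 := by
        simp only [idM, ite_eq_right_iff]
        exact fun hh => absurd hh hℓ
      have h2 : idM m ℓ = 0 := by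
        simp only [idM, ite_eq_right_iff]
        exact fun hh => absurd hh.symm hℓ
      rw [if_neg hℓ, h1, h2]
      ring
  rw [Finset.sum_congr rfl fun ℓ _ => hterm ℓ,
    Finset.sum_ite_eq' Finset.univ m (fun _ => 2 * cdg g p p' A GpI m)]
  simp only [Finset.mem_univ, if_true]
  unfold cdg
  ring

lemma XX_mmm (m : Fin 4) : XX g p p' A GpI m m m = 0 := by
  unfold XX
  rw [conjS_sum_diag]
  ring

lemma XX_symac (hsym : ∀ x a b, g x a b = g x b a) (m a c : Fin 4) :
    XX g p p' A GpI m a c = XX g p p' A GpI m c a := by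
  unfold XX
  rw [Sg_symac g p p' A GpI hsym]
  congr 1
  refine Finset.sum_congr rfl fun ℓ _ => ?_
  unfold conjS
  ring

end DataLemmas
end NFC
end
noncomputable section
namespace NFC

section ConjRaw
variable (g : MetricField) (p p' : Pt) (A GpI : Mtx)

lemma conjRaw_eq {Sz : Fin 4 → Mtx} (ℓ : Fin 4)
    (hSz : ∀ j a' c', Sz j a' c' = if j = ℓ then
      (idM ℓ a' * CUz g p p' A GpI ℓ c' + idM ℓ c' * CUz g p p' A GpI ℓ a') else 0)
    (k a c : Fin 4) :
    ∑ m, MkM' ℓ k m * (∑ m', (∑ n, Sz m m' n * MkM ℓ n c) * MkM ℓ m' a)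
      = conjS g p p' A GpI ℓ k a c := by
  set cv := cdg g p p' A GpI ℓ with hcv
  have hCU : ∀ j, CUz g p p' A GpI ℓ j = cv * idM j (ℓ+1) := fun j => rfl
  -- kill terms m ≠ ℓ
  have hzero : ∀ m, m ≠ ℓ → (∑ m', (∑ n, Sz m m' n * MkM ℓ n c) * MkM ℓ m' a) = 0 := by
    intro m hm
    have hz : ∀ m' n : Fin 4, Sz m m' n = 0 := fun m' n => by rw [hSz, if_neg hm]
    simp [hz]
  rw [Finset.sum_eq_single ℓ (fun m _ hm => by rw [hzero m hm, mul_zero]) (by simp)]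
  -- inner n-sum
  have hstep1 : ∀ m' : Fin 4, (∑ n, Sz ℓ m' n * MkM ℓ n c)
      = idM ℓ m' * (cv * MkM ℓ (ℓ+1) c) + CUz g p p' A GpI ℓ m' * MkM ℓ ℓ c := by
    intro m'
    have he : ∀ n : Fin 4, Sz ℓ m' n * MkM ℓ n c
        = idM ℓ m' * (cv * (idM n (ℓ+1) * MkM ℓ n c))
          + CUz g p p' A GpI ℓ m' * (idM ℓ n * MkM ℓ n c) := by
      intro n
      rw [hSz, if_pos rfl, hCU n]
      ring
    rw [Finset.sum_congr rfl fun n _ => he n, Finset.sum_add_distrib, ← Finset.mul_sum,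
      ← Finset.mul_sum, ← Finset.mul_sum]
    rw [sum_idMT (fun n => MkM ℓ n c) (ℓ+1), sum_idM_mul (fun n => MkM ℓ n c) ℓ]
  rw [Finset.sum_congr rfl fun m' _ => by rw [hstep1 m']]
  -- m'-sum
  have hstep2 : ∑ m', (idM ℓ m' * (cv * MkM ℓ (ℓ+1) c)
        + CUz g p p' A GpI ℓ m' * MkM ℓ ℓ c) * MkM ℓ m' a
      = (cv * MkM ℓ (ℓ+1) c) * MkM ℓ ℓ a + (MkM ℓ ℓ c) * (cv * MkM ℓ (ℓ+1) a) := by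
    have he : ∀ m' : Fin 4, (idM ℓ m' * (cv * MkM ℓ (ℓ+1) c)
          + CUz g p p' A GpI ℓ m' * MkM ℓ ℓ c) * MkM ℓ m' a
        = (cv * MkM ℓ (ℓ+1) c) * (idM ℓ m' * MkM ℓ m' a)
          + (MkM ℓ ℓ c * cv) * (idM m' (ℓ+1) * MkM ℓ m' a) := by
      intro m'
      rw [hCU m']
      ring
    rw [Finset.sum_congr rfl fun m' _ => he m', Finset.sum_add_distrib, ← Finset.mul_sum,
      ← Finset.mul_sum]
    rw [sum_idM_mul (fun m' => MkM ℓ m' a) ℓ, sum_idMT (fun m' => MkM ℓ m' a) (ℓ+1)]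
    ring
  rw [hstep2]
  -- entry values
  have e1 : MkM' ℓ k ℓ = idM k ℓ - idM k (ℓ+1) := by
    show idM k ℓ - idM k (ℓ+1) * idM ℓ ℓ = _
    rw [idM_diag]; ring
  have e2 : MkM ℓ (ℓ+1) c = idM (ℓ+1) c + idM c ℓ := by
    show idM (ℓ+1) c + idM (ℓ+1) (ℓ+1) * idM c ℓ = _
    rw [idM_diag]; ring
  have e3 : MkM ℓ ℓ a = idM ℓ a := by
    show idM ℓ a + idM ℓ (ℓ+1) * idM a ℓ = _
    rw [idM_succ]; ring
  have e4 : MkM ℓ ℓ c = idM ℓ c := by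
    show idM ℓ c + idM ℓ (ℓ+1) * idM c ℓ = _
    rw [idM_succ]; ring
  have e5 : MkM ℓ (ℓ+1) a = idM (ℓ+1) a + idM a ℓ := by
    show idM (ℓ+1) a + idM (ℓ+1) (ℓ+1) * idM a ℓ = _
    rw [idM_diag]; ring
  rw [e1, e2, e3, e4, e5]
  unfold conjS
  rw [← hcv]
  ring

end ConjRaw
end NFC
end
noncomputable section
namespace NFC

lemma Jet.compII {φ ψ : Pt → Pt} {x₀ : Pt} {S₁ S₂ : Fin 4 → Mtx}
    (h2 : Jet ψ 0 0 idM S₂) (h1 : Jet φ x₀ 0 idM S₁) :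
    Jet (fun x => ψ (φ x)) x₀ 0 idM (fun k a c => S₁ k a c + S₂ k a c) := by
  refine (h2.comp h1).congrS (fun k a => ?_) (fun k a c => ?_)
  · exact sum_idM_mul (fun m => idM m a) k
  · have e1 : ∀ m : Fin 4, (∑ n, S₂ k m n * idM n c) = S₂ k m c :=
      fun m => sum_mul_idM (fun n => S₂ k m n) c
    simp only [e1]
    rw [Finset.sum_add_distrib]
    rw [sum_mul_idM (fun m => S₂ k m c) a, sum_idM_mul (fun m => S₁ m a c) k]
    ring

lemma affF_at_zero (b : Pt) (M : Mtx) : affF b M 0 = b := by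
  funext k
  show b k + ∑ m, M k m * (0:Pt) m = b k
  simp

lemma fderiv_mtx_component {F : Pt → Mtx} {x : Pt}
    (hF : ∀ a b, ContDiff ℝ (⊤ : ℕ∞) (fun y => F y a b)) (v : Pt) (a b : Fin 4) :
    fderiv ℝ F x v a b = fderiv ℝ (fun y => F y a b) x v := by
  have hFa : ∀ a', ContDiff ℝ (⊤ : ℕ∞) (fun y => F y a') := fun a' => contDiff_pi.mpr (hF a')
  have hFd : DifferentiableAt ℝ F x :=
    ((contDiff_pi.mpr hFa).differentiable (by simp)).differentiableAt
  have h1 : fderiv ℝ F x v a = fderiv ℝ (fun y => F y a) x v := by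
    have h2 : (fun y => F y a) = (ContinuousLinearMap.proj (R := ℝ)
        (φ := fun _ : Fin 4 => (Fin 4 → ℝ)) a) ∘ F := rfl
    rw [h2, fderiv_comp x (ContinuousLinearMap.proj a).differentiableAt hFd]
    simp
  rw [h1]
  exact fderiv_component (((hFa a).differentiable (by simp)).differentiableAt) v b

lemma ee_decomp (v : Pt) : v = ∑ c, v c • ee c := by
  funext m
  rw [Finset.sum_apply]
  have h3 : ∀ n : Fin 4, (v n • ee n) m = (if m = n then v n else 0) := by
    intro n; by_cases hmn : m = n <;> simp [ee_apply, hmn]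
  rw [Finset.sum_congr rfl (fun n _ => h3 n), Finset.sum_ite_eq]
  simp

lemma fderiv_ext_pd {F G : Pt → Mtx} {x : Pt}
    (hF : ∀ a b, ContDiff ℝ (⊤ : ℕ∞) (fun y => F y a b)) (hG : ∀ a b, ContDiff ℝ (⊤ : ℕ∞) (fun y => G y a b))
    (h : ∀ a b c, pd (fun y => F y a b) c x = pd (fun y => G y a b) c x) :
    fderiv ℝ F x = fderiv ℝ G x := by
  apply ContinuousLinearMap.ext
  intro v
  funext a b
  rw [fderiv_mtx_component hF v a b, fderiv_mtx_component hG v a b]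
  have key : ∀ (f : Pt → ℝ), fderiv ℝ f x v = ∑ c, v c * fderiv ℝ f x (ee c) := by
    intro f
    conv_lhs => rw [ee_decomp v]
    rw [map_sum]
    exact Finset.sum_congr rfl fun c _ => by rw [map_smul]; rfl
  rw [key, key]
  exact Finset.sum_congr rfl fun c _ => by rw [show fderiv ℝ (fun y => F y a b) x (ee c)
    = pd (fun y => F y a b) c x from rfl, show fderiv ℝ (fun y => G y a b) x (ee c)
    = pd (fun y => G y a b) c x from rfl, h a b c]

lemma pullback_component {φ : Pt → Pt} (hφs : ContDiff ℝ (⊤ : ℕ∞) φ) (g : MetricField)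
    (x : Pt) (a b : Fin 4) :
    pullback φ g x a b = ∑ k, ∑ l, g (φ x) k l * J φ x k a * J φ x l b := by
  unfold pullback
  refine Finset.sum_congr rfl fun k _ => Finset.sum_congr rfl fun l _ => ?_
  rw [fderiv_component (diffAtV hφs x) _ k, fderiv_component (diffAtV hφs x) _ l]
  rfl

lemma contDiff_pullback_component {φ : Pt → Pt} (hφs : ContDiff ℝ (⊤ : ℕ∞) φ) {g : MetricField}
    (hgs : ContDiff ℝ (⊤ : ℕ∞) (fun x => g x)) (a b : Fin 4) :
    ContDiff ℝ (⊤ : ℕ∞) (fun x => pullback φ g x a b) := by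
  have hgc : ∀ k l, ContDiff ℝ (⊤ : ℕ∞) (fun x => g x k l) :=
    fun k l => contDiff_pi.mp (contDiff_pi.mp hgs k) l
  have h1 : ContDiff ℝ (⊤ : ℕ∞) (fun x => ∑ k, ∑ l, g (φ x) k l * J φ x k a * J φ x l b) := by
    refine ContDiff.sum fun k _ => ContDiff.sum fun l _ => ?_
    exact (((hgc k l).comp hφs).mul (contDiff_J hφs k a)).mul (contDiff_J hφs l b)
  have heq : (fun x => pullback φ g x a b)
      = (fun x => ∑ k, ∑ l, g (φ x) k l * J φ x k a * J φ x l b) :=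
    funext fun x => pullback_component hφs g x a b
  rw [heq]
  exact h1

section FinalPd
variable (g : MetricField) (p p' : Pt) (Ae GpI : Mtx)

set_option maxHeartbeats 2000000 in
lemma final_pd (hsym : ∀ x a b, g x a b = g x b a)
    (hgs : ContDiff ℝ (⊤ : ℕ∞) (fun x => g x)) {φ : Pt → Pt}
    (hφs : ContDiff ℝ (⊤ : ℕ∞) φ) (hφp : φ p = p')
    (hjac : ∀ k a, J φ p k a = Ae k a)
    (hsnd : ∀ k a c, pd (fun x => J φ x k a) c p = ∑ m, Ae k m * Sg g p p' Ae GpI m a c)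
    (hAprop : ∀ m b, ∑ k, ∑ l, Ae k m * g p' k l * Ae l b = g p m b)
    (hginv : ∀ b j, ∑ m, g p m b * GpI m j = idM j b)
    (a b c : Fin 4) :
    pd (fun x => pullback φ g x a b) c p = pd (fun x => g x a b) c p := by
  have hgc : ∀ k l, ContDiff ℝ (⊤ : ℕ∞) (fun x => g x k l) :=
    fun k l => contDiff_pi.mp (contDiff_pi.mp hgs k) l
  -- differentiability of pieces
  have hGd : ∀ k l, DifferentiableAt ℝ (fun x => g (φ x) k l) p :=
    fun k l => diffAt ((hgc k l).comp hφs) p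
  have hJd : ∀ k a', DifferentiableAt ℝ (fun x => J φ x k a') p :=
    fun k a' => diffAt (contDiff_J hφs k a') p
  -- pd of the composition g ∘ φ
  have hpdG : ∀ k l, pd (fun x => g (φ x) k l) c p
      = ∑ n, pd (fun y => g y k l) n p' * Ae n c := by
    intro k l
    rw [pd_comp (diffAt (hgc k l) (φ p)) (diffAtV hφs p) c, hφp]
    exact Finset.sum_congr rfl fun n _ => by rw [hjac n c]
  -- step 1 : rewrite pullback component
  rw [pd_congr (fun x => pullback_component hφs g x a b) c p]
  -- step 2 : pd of double sum
  have hprod : ∀ k l, DifferentiableAt ℝ (fun x => g (φ x) k l * J φ x k a * J φ x l b) p :=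
    fun k l => ((hGd k l).mul (hJd k a)).mul (hJd l b)
  rw [pd_sum (fun k _ => (by
    exact diffAt (ContDiff.sum fun l _ =>
      (((hgc k l).comp hφs).mul (contDiff_J hφs k a)).mul (contDiff_J hφs l b)) p)) c]
  have hterm : ∀ k l : Fin 4, pd (fun x => g (φ x) k l * J φ x k a * J φ x l b) c p
      = g p' k l * Ae k a * (∑ m, Ae l m * Sg g p p' Ae GpI m b c)
        + Ae l b * (g p' k l * (∑ m, Ae k m * Sg g p p' Ae GpI m a c)
            + Ae k a * (∑ n, pd (fun y => g y k l) n p' * Ae n c)) := by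
    intro k l
    rw [pd_mul ((hGd k l).fun_mul (hJd k a)) (hJd l b) c, pd_mul (hGd k l) (hJd k a) c]
    have hGv : g (φ p) k l = g p' k l := by rw [hφp]
    rw [hGv, hjac k a, hjac l b, hsnd k a c, hsnd l b c, hpdG k l]
  rw [Finset.sum_congr rfl fun k _ => by
    rw [pd_sum (fun l _ => hprod k l) c,
      Finset.sum_congr rfl fun l _ => hterm k l]]
  -- step 3 : rewrite the RHS into atoms
  have hRHS : pd (fun x => g x a b) c p
      = (∑ m, (∑ k, ∑ l, Ae k m * g p' k l * Ae l b) * Sg g p p' Ae GpI m a c)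
        + (∑ m, (∑ k, ∑ l, Ae k a * g p' k l * Ae l m) * Sg g p p' Ae GpI m b c)
        + P3 g p' Ae c a b := by
    have e1 : (∑ m, (∑ k, ∑ l, Ae k m * g p' k l * Ae l b) * Sg g p p' Ae GpI m a c)
        = ∑ m, g p m b * Sg g p p' Ae GpI m a c :=
      Finset.sum_congr rfl fun m _ => by rw [hAprop m b]
    have e2 : (∑ m, (∑ k, ∑ l, Ae k a * g p' k l * Ae l m) * Sg g p p' Ae GpI m b c)
        = ∑ m, g p m a * Sg g p p' Ae GpI m b c :=
      Finset.sum_congr rfl fun m _ => by rw [hAprop a m, hsym p a m]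
    rw [e1, e2, Sg_contract g p p' Ae GpI hginv a c b, Sg_contract g p p' Ae GpI hginv b c a]
    rw [show HH g p p' Ae a c b + HH g p p' Ae b c a = TT g p p' Ae c a b from
      HH_pair g p p' Ae hsym a c b]
    unfold TT
    ring
  rw [hRHS]
  unfold P3
  simp only [Fin.sum_univ_four]
  ring

end FinalPd
end NFC
end
noncomputable section
namespace NFC

lemma collapse2 {M N : Mtx} (hMN : ∀ k n, ∑ m, M k m * N m n = idM k n)
    (v : Fin 4 → ℝ) (k : Fin 4) : ∑ m, M k m * (∑ n, N m n * v n) = v k := by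
  have h1 : ∀ m : Fin 4, M k m * (∑ n, N m n * v n) = ∑ n, M k m * N m n * v n := by
    intro m
    rw [Finset.mul_sum]
    exact Finset.sum_congr rfl fun n _ => by ring
  rw [Finset.sum_congr rfl fun m _ => h1 m, Finset.sum_comm]
  have h2 : ∀ n : Fin 4, ∑ m, M k m * N m n * v n = idM k n * v n := by
    intro n
    rw [← Finset.sum_mul, hMN k n]
  rw [Finset.sum_congr rfl fun n _ => h2 n]
  exact sum_idM_mul v k

end NFC
end

noncomputable section
open NFC Matrix

theorem no_first_order_concomitant_of_lorentz_metric'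
    (g : MetricField) (hg : IsLorentzMetric g) (p p' : Pt) :
    ∃ φ : Pt → Pt, IsDiffeo φ ∧ φ p = p' ∧
      pullback φ g p = g p ∧
      fderiv ℝ (fun x => pullback φ g x) p = fderiv ℝ (fun x => g x) p := by
  classical
  have hsym : ∀ x a b, g x a b = g x b a := hg.symm
  obtain ⟨Am, hAdet, hAprop0⟩ := lorentz_transport (hg.sig p) (hg.sig p')
  set Ae : Mtx := fun k m => Am k m with hAe
  have hAprop : ∀ m b, ∑ k, ∑ l, Ae k m * g p' k l * Ae l b = g p m b := hAprop0
  -- inverse of A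
  set AeI : Mtx := fun k m => Am⁻¹ k m with hAeI
  have hAiA : ∀ k n, ∑ m, AeI k m * Ae m n = idM k n := by
    intro k n
    have h1 : (Am⁻¹ * Am) k n = (1 : Matrix (Fin 4) (Fin 4) ℝ) k n := by
      rw [Matrix.nonsing_inv_mul Am hAdet]
    rw [Matrix.mul_apply] at h1
    rw [show (∑ m, AeI k m * Ae m n) = ∑ m, Am⁻¹ k m * Am m n from rfl, h1, Matrix.one_apply]
    rfl
  have hAAi : ∀ k n, ∑ m, Ae k m * AeI m n = idM k n := by
    intro k n
    have h1 : (Am * Am⁻¹) k n = (1 : Matrix (Fin 4) (Fin 4) ℝ) k n := by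
      rw [Matrix.mul_nonsing_inv Am hAdet]
    rw [Matrix.mul_apply] at h1
    rw [show (∑ m, Ae k m * AeI m n) = ∑ m, Am k m * Am⁻¹ m n from rfl, h1, Matrix.one_apply]
    rfl
  -- inverse of g p
  have hGpdet : IsUnit (Matrix.of (g p)).det := isUnit_sig_det (hg.sig p)
  set GpI : Mtx := fun m j => (Matrix.of (g p))⁻¹ m j with hGpI
  have hGpsym : (Matrix.of (g p))ᵀ = Matrix.of (g p) := by
    ext i j; exact hsym p j i
  have hginv : ∀ b j, ∑ m, g p m b * GpI m j = idM j b := by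
    intro b j
    have h1 : ∑ m, g p m b * GpI m j = (((Matrix.of (g p))⁻¹)ᵀ * Matrix.of (g p)) j b := by
      rw [Matrix.mul_apply]
      exact Finset.sum_congr rfl fun m _ => by
        simp [Matrix.transpose_apply]
        ring
    rw [h1, Matrix.transpose_nonsing_inv, hGpsym,
      Matrix.nonsing_inv_mul (Matrix.of (g p)) hGpdet, Matrix.one_apply]
    rfl
  -- the beta units
  set CUb : Fin 4 → Fin 4 → ℝ := fun m j => XX g p p' Ae GpI m m j with hCUb
  set OWb : Fin 4 → Mtx :=
    fun m a c => if a = m ∨ c = m then 0 else XX g p p' Ae GpI m a c with hOWb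
  have hOWbsym : ∀ m i j, OWb m i j = OWb m j i := by
    intro m i j
    simp only [hOWb]
    by_cases hi : i = m
    · by_cases hj : j = m <;> simp [hi, hj]
    · by_cases hj : j = m
      · simp [hi, hj]
      · simp [hi, hj]
        exact XX_symac g p p' Ae GpI hsym m i j
  have jet_B : ∀ m : Fin 4, Jet (beta m (CUb m) (OWb m)) 0 0 idM
      (fun j a c => if j = m then XX g p p' Ae GpI m a c else 0) := by
    intro m
    refine (Jet_beta m (CUb m) (OWb m) (hOWbsym m)).congrS (fun k a => rfl) (fun j a c => ?_)
    by_cases hj : j = m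
    · subst hj
      simp only [if_pos rfl]
      by_cases ha : j = a
      · by_cases hc : j = c
        · simp only [if_pos ha, if_pos hc, hCUb, hOWb, ← ha, ← hc]
          rw [XX_mmm]
          simp [XX_mmm g p p' Ae GpI j]
        · simp only [if_pos ha, if_neg hc, hCUb, hOWb, ← ha]
          have : (a = j ∨ c = j) := Or.inl ha.symm
          simp [this, XX_mmm g p p' Ae GpI j]
      · by_cases hc : j = c
        · simp only [if_neg ha, if_pos hc, hCUb, hOWb, ← hc]
          have : (a = j ∨ c = j) := Or.inr hc.symm
          simp [this]
          exact (XX_symac g p p' Ae GpI hsym j a j).symm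
        · simp only [if_neg ha, if_neg hc, hCUb, hOWb]
          have hac : ¬(a = j ∨ c = j) := by
            rintro (h | h)
            exacts [ha h.symm, hc h.symm]
          simp [hac]
    · simp [hj]
  have diffeo_B : ∀ m : Fin 4, IsDiffeo (beta m (CUb m) (OWb m)) := by
    intro m
    refine isDiffeo_beta m (CUb m) (OWb m) ?_ ?_ ?_
    · exact XX_mmm g p p' Ae GpI m
    · intro j; simp [hOWb]
    · intro j; simp [hOWb]
  -- the conjugated units
  have hCUz0 : ∀ ℓ : Fin 4, CUz g p p' Ae GpI ℓ ℓ = 0 := by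
    intro ℓ
    show cdg g p p' Ae GpI ℓ * idM ℓ (ℓ+1) = 0
    rw [idM_succ]; ring
  have jet_z : ∀ ℓ : Fin 4, Jet (beta ℓ (CUz g p p' Ae GpI ℓ) (fun _ _ => 0)) 0 0 idM
      (fun j a' c' => if j = ℓ then
        (idM ℓ a' * CUz g p p' Ae GpI ℓ c' + idM ℓ c' * CUz g p p' Ae GpI ℓ a') else 0) := by
    intro ℓ
    refine (Jet_beta ℓ (CUz g p p' Ae GpI ℓ) (fun _ _ => 0) (fun i j => rfl)).congrS
      (fun k a => rfl) (fun j a c => ?_)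
    by_cases hj : j = ℓ
    · subst hj
      simp only [if_pos rfl, idM]
      ring
    · simp [hj]
  have diffeo_z : ∀ ℓ : Fin 4, IsDiffeo (beta ℓ (CUz g p p' Ae GpI ℓ) (fun _ _ => 0)) := by
    intro ℓ
    exact isDiffeo_beta ℓ _ _ (hCUz0 ℓ) (fun j => rfl) (fun j => rfl)
  have diffeo_aff0 : ∀ ℓ : Fin 4, IsDiffeo (affF 0 (MkM ℓ)) := by
    intro ℓ
    exact isDiffeo_affF (b := 0) (b' := 0) (MkM_inv ℓ) (MkM_inv' ℓ)
      (fun k => by simp) (fun k => by simp)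
  have diffeo_aff0' : ∀ ℓ : Fin 4, IsDiffeo (affF 0 (MkM' ℓ)) := by
    intro ℓ
    exact isDiffeo_affF (b := 0) (b' := 0) (MkM_inv' ℓ) (MkM_inv ℓ)
      (fun k => by simp) (fun k => by simp)
  have jet_T : ∀ ℓ : Fin 4, Jet
      (fun x => affF 0 (MkM' ℓ) (beta ℓ (CUz g p p' Ae GpI ℓ) (fun _ _ => 0) (affF 0 (MkM ℓ) x)))
      0 0 idM (fun m a c => conjS g p p' Ae GpI ℓ m a c) := by
    intro ℓ
    refine ((jet_z ℓ).conj (MkM_inv ℓ)).congrS (fun k a => rfl) (fun k a c => ?_)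
    exact conjRaw_eq g p p' Ae GpI ℓ (fun j a' c' => rfl) k a c
  -- compose the eight nonlinear units
  have j01 := (jet_B 1).compId (jet_B 0)
  have j012 := (jet_B 2).compId j01
  have j0123 := (jet_B 3).compId j012
  have jT0 := (jet_T 0).compId j0123
  have jT1 := (jet_T 1).compId jT0
  have jT2 := (jet_T 2).compId jT1
  have jT3 := (jet_T 3).compId jT2
  have hdec : ∀ k a c : Fin 4,
      ((((((((if k = 0 then XX g p p' Ae GpI 0 a c else 0)
        + (if k = 1 then XX g p p' Ae GpI 1 a c else 0))
        + (if k = 2 then XX g p p' Ae GpI 2 a c else 0))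
        + (if k = 3 then XX g p p' Ae GpI 3 a c else 0))
        + conjS g p p' Ae GpI 0 k a c)
        + conjS g p p' Ae GpI 1 k a c)
        + conjS g p p' Ae GpI 2 k a c)
        + conjS g p p' Ae GpI 3 k a c)
      = Sg g p p' Ae GpI k a c := by
    intro k a c
    fin_cases k <;> simp [XX, Fin.sum_univ_four] <;> ring
  have jσ := jT3.congrS (fun k a => rfl) (fun k a c => hdec k a c)
  -- translation and affine parts
  have htrval : affF (fun k => -(p k)) idM p = 0 := by
    funext k
    show -(p k) + ∑ m, idM k m * p m = (0:Pt) k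
    rw [sum_idM_mul (fun m => p m) k]
    simp
  have jtr : Jet (affF (fun k => -(p k)) idM) p 0 idM (fun _ _ _ => 0) := by
    have h := Jet.affine (fun k => -(p k)) idM p
    rwa [htrval] at h
  have jst := jσ.compII jtr
  have jst' : Jet _ p 0 idM (fun k a c => Sg g p p' Ae GpI k a c) :=
    jst.congrS (fun k a => rfl) (fun k a c => zero_add _)
  have jaff : Jet (affF p' Ae) 0 p' Ae (fun _ _ _ => 0) := by
    have h := Jet.affine p' Ae 0
    rwa [affF_at_zero p' Ae] at h
  have jφ0 := jaff.comp jst'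
  have jφ1 : Jet _ p p' Ae (fun k a c => ∑ m, Ae k m * Sg g p p' Ae GpI m a c) :=
    jφ0.congrS (fun k a => sum_mul_idM (fun m => Ae k m) a)
      (fun k a c => Finset.sum_congr rfl fun m _ => by simp)
  -- name the final diffeomorphism
  set φbig : Pt → Pt := fun x => affF p' Ae
      (affF 0 (MkM' 3) (beta 3 (CUz g p p' Ae GpI 3) (fun _ _ => 0) (affF 0 (MkM 3) (affF 0 (MkM' 2) (beta 2 (CUz g p p' Ae GpI 2) (fun _ _ => 0) (affF 0 (MkM 2) (affF 0 (MkM' 1) (beta 1 (CUz g p p' Ae GpI 1) (fun _ _ => 0) (affF 0 (MkM 1) (affF 0 (MkM' 0) (beta 0 (CUz g p p' Ae GpI 0) (fun _ _ => 0) (affF 0 (MkM 0) (beta 3 (CUb 3) (OWb 3) (beta 2 (CUb 2) (OWb 2) (beta 1 (CUb 1) (OWb 1) (beta 0 (CUb 0) (OWb 0) (affF (fun k => -(p k)) idM x))))))))))))))))) with hφbig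
  have jφ : Jet φbig p p' Ae
      (fun k a c => ∑ m, Ae k m * Sg g p p' Ae GpI m a c) := by
    exact jφ1.congrFun (fun x => rfl)
  have hφs := jφ.smooth
  have hφp := jφ.val
  -- diffeomorphism property
  have hIdId : ∀ k n : Fin 4, ∑ m, idM k m * idM m n = idM k n :=
    fun k n => sum_idM_mul (fun m => idM m n) k
  have dtr : IsDiffeo (affF (fun k => -(p k)) idM) := by
    refine isDiffeo_affF (b' := p) (M' := idM) hIdId hIdId (fun k => ?_) (fun k => ?_)
    · rw [sum_idM_mul (fun m => -(p m)) k]; ring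
    · rw [sum_idM_mul (fun m => p m) k]; ring
  have daff : IsDiffeo (affF p' Ae) := by
    refine isDiffeo_affF (b' := fun k => -(∑ n, AeI k n * p' n)) (M' := AeI)
      hAiA hAAi (fun k => ?_) (fun k => ?_)
    · ring
    · have h1 : ∀ m : Fin 4, Ae k m * -(∑ n, AeI m n * p' n)
          = -(Ae k m * (∑ n, AeI m n * p' n)) := fun m => by ring
      rw [Finset.sum_congr rfl fun m _ => h1 m, Finset.sum_neg_distrib,
        collapse2 hAAi (fun n => p' n) k]
      ring
  have dT : ∀ ℓ : Fin 4, IsDiffeo (fun x => affF 0 (MkM' ℓ)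
      (beta ℓ (CUz g p p' Ae GpI ℓ) (fun _ _ => 0) (affF 0 (MkM ℓ) x))) :=
    fun ℓ => IsDiffeo.compD (diffeo_aff0' ℓ) (IsDiffeo.compD (diffeo_z ℓ) (diffeo_aff0 ℓ))
  have hdiffeo : IsDiffeo φbig := by
    exact IsDiffeo.compD daff (IsDiffeo.compD (diffeo_aff0' 3) (IsDiffeo.compD (diffeo_z 3) (IsDiffeo.compD (diffeo_aff0 3) (IsDiffeo.compD (diffeo_aff0' 2) (IsDiffeo.compD (diffeo_z 2) (IsDiffeo.compD (diffeo_aff0 2) (IsDiffeo.compD (diffeo_aff0' 1) (IsDiffeo.compD (diffeo_z 1) (IsDiffeo.compD (diffeo_aff0 1) (IsDiffeo.compD (diffeo_aff0' 0) (IsDiffeo.compD (diffeo_z 0) (IsDiffeo.compD (diffeo_aff0 0) (IsDiffeo.compD (diffeo_B 3) (IsDiffeo.compD (diffeo_B 2) (IsDiffeo.compD (diffeo_B 1) (IsDiffeo.compD (diffeo_B 0) dtr))))))))))))))))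
  -- pullback value
  have hpv : pullback φbig g p = g p := by
    funext a b
    rw [pullback_component hφs g p a b]
    have h1 : ∀ k l : Fin 4, g (φbig p) k l * J φbig p k a * J φbig p l b
        = Ae k a * g p' k l * Ae l b := by
      intro k l
      rw [hφp, jφ.jac k a, jφ.jac l b]
      ring
    rw [Finset.sum_congr rfl fun k _ => Finset.sum_congr rfl fun l _ => h1 k l]
    exact hAprop a b
  -- conclusion
  refine ⟨φbig, hdiffeo, hφp, hpv, ?_⟩
  have hGc : ∀ a b, ContDiff ℝ (⊤ : ℕ∞) (fun y => g y a b) :=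
    fun a b => contDiff_pi.mp (contDiff_pi.mp hg.smooth a) b
  exact fderiv_ext_pd (fun a b => contDiff_pullback_component hφs hg.smooth a b) hGc
    (fun a b c => final_pd g p p' Ae GpI hsym hg.smooth hφs hφp jφ.jac jφ.snd hAprop hginv a b c)

end

noncomputable section

/-- there is no (non-trivial) first-order concomitant of the
metric: for any Lorentz metric `g` and any two points `p`, `p'`, there is a
diffeomorphism `φ` with `φ(p) = p'` whose pullback of `g` matches `g` together
with its first coordinate partial derivatives at `p`.  Hence the 1-jet of any
Lorentz metric at any point can be carried to the 1-jet of the same metric at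
any other point. -/
theorem no_first_order_concomitant_of_lorentz_metric
    (g : MetricField) (hg : IsLorentzMetric g) (p p' : Pt) :
    ∃ φ : Pt → Pt, IsDiffeo φ ∧ φ p = p' ∧
      pullback φ g p = g p ∧
      fderiv ℝ (fun x => pullback φ g x) p = fderiv ℝ (fun x => g x) p := by
  exact no_first_order_concomitant_of_lorentz_metric' g hg p p'

end
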